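/- arXiv:2604.04124 — 7 statements merged into one kernel-verified Lean document; each statement's English description precedes it below -/
import Mathlib

section
/- For all indices 0 ≤ i, j ≤ n−1, the coefficient of t^{n−1} in the remainder of t^i · D_f(t^j) upon division by f in 𝔽_q[t] equals the Kronecker delta δ_{i,j}. (Equivalently, with respect to the residue pairing ⟨a, η*⟩ = Res_∞(a·η*), the family {D_f(t^j)·(−dt/f)}_{0≤j<n} is the dual basis of the basis {t^i}_{0≤i<n} of 𝔽_q[t]/(f).) -/
/-!
Write `n = deg f` and split `f = t ^ (j + 1) D_f(t ^ j) + r_j` with `deg r_j ≤ j`. For `i ≤ j` the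
product `t ^ i D_f(t ^ j)` already has degree `< n`, so it is its own remainder, and its
coefficient of `t ^ (n - 1)` is `a_(n + j - i)`, which is `a_n = 1` for `i = j` and lies outside
`D_f(t ^ j)` for `i < j`. For `i > j`, `t ^ i D_f(t ^ j) ≡ -t ^ (i - j - 1) r_j` modulo `f`, and the
right-hand side has degree `< i ≤ n - 1`.
-/

open Polynomial Finset

namespace Polynomial

section Semiring

variable {R : Type*} [Semiring R]

theorem coeff_sum_range_C_mul_X_pow (a : ℕ → R) (d k : ℕ) :
    (∑ m ∈ range d, C (a m) * X ^ m).coeff k = if k < d then a k else 0 := by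
  simp

theorem degree_X_pow_mul_sum_range_lt (b : ℕ → R) (a d : ℕ) :
    (X ^ a * ∑ m ∈ range d, C (b m) * X ^ m).degree < ↑(a + d) := by
  rw [degree_lt_iff_coeff_zero]
  intro k hk
  rw [coeff_X_pow_mul', coeff_sum_range_C_mul_X_pow]
  split_ifs <;> first | rfl | omega

theorem X_pow_mul_sum_add_sum_eq (f : R[X]) {n k : ℕ} (hf : f.natDegree < n) (hk : k ≤ n) :
    X ^ k * ∑ m ∈ range (n - k), C (f.coeff (k + m)) * X ^ m
      + ∑ m ∈ range k, C (f.coeff m) * X ^ m = f := by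
  conv_rhs => rw [f.as_sum_range_C_mul_X_pow' hf, ← Nat.add_sub_cancel' hk, sum_range_add]
  rw [add_comm, mul_sum]
  congr 1
  refine sum_congr rfl fun m _ => ?_
  rw [← mul_assoc, X_pow_mul, mul_assoc, ← pow_add]

/-- `D_f(t ^ j)`, the image of `t ^ j` under the dual map of `f`. -/
noncomputable def dualMap (f : R[X]) (j : ℕ) : R[X] :=
  ∑ m ∈ range (f.natDegree - j), C (f.coeff (j + m + 1)) * X ^ m

theorem coeff_dualMap (f : R[X]) (j k : ℕ) :
    (dualMap f j).coeff k = if k < f.natDegree - j then f.coeff (j + k + 1) else 0 :=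
  coeff_sum_range_C_mul_X_pow _ _ _

theorem X_pow_mul_dualMap_add_sum_eq (f : R[X]) {j : ℕ} (hj : j ≤ f.natDegree) :
    X ^ (j + 1) * dualMap f j + ∑ m ∈ range (j + 1), C (f.coeff m) * X ^ m = f := by
  have h := X_pow_mul_sum_add_sum_eq f (lt_add_one _) (Nat.add_le_add_right hj 1)
  rw [Nat.add_sub_add_right] at h
  convert h using 3
  exact sum_congr rfl fun m _ => by rw [add_right_comm]

end Semiring

section Ring

variable {R : Type*} [Ring R] {f g : R[X]}

/-- The residue pairing `⟨g, -dt/f⟩ = Res_∞(-g dt/f)`: the coefficient of `t ^ (deg f - 1)` in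
`g mod f`. -/
noncomputable def residue (f g : R[X]) : R :=
  (g %ₘ f).coeff (f.natDegree - 1)

theorem residue_eq_coeff_of_degree_lt [Nontrivial R] (hf : f.Monic)
    (hg : g.degree < f.natDegree) : residue f g = g.coeff (f.natDegree - 1) := by
  rw [residue, (modByMonic_eq_self_iff hf).2 (by rwa [degree_eq_natDegree hf.ne_zero])]

theorem residue_X_pow_mul_dualMap_of_le [Nontrivial R] {i j : ℕ} (hf : f.Monic) (hij : i ≤ j)
    (hj : j < f.natDegree) :
    residue f (X ^ i * dualMap f j) = if i = j then 1 else 0 := by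
  have hdeg : (X ^ i * dualMap f j).degree < ↑f.natDegree :=
    (degree_X_pow_mul_sum_range_lt _ _ _).trans_le (by exact_mod_cast (by omega))
  rw [residue_eq_coeff_of_degree_lt hf hdeg, coeff_X_pow_mul', if_pos (by omega), coeff_dualMap]
  rcases hij.eq_or_lt with rfl | hlt
  · rw [if_pos (by omega), if_pos rfl, ← hf.coeff_natDegree]
    congr 1
    omega
  · rw [if_neg (by omega), if_neg hlt.ne]

end Ring

section CommRing

variable {R : Type*} [CommRing R] {f g h : R[X]}

theorem residue_eq_of_dvd_sub (hf : f.Monic) (hgh : f ∣ g - h) : residue f g = residue f h :=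
  congrArg (coeff · _) (modByMonic_eq_of_dvd_sub hf hgh)

theorem residue_X_pow_mul_dualMap_of_lt [Nontrivial R] {i j : ℕ} (hf : f.Monic) (hji : j < i)
    (hi : i < f.natDegree) :
    residue f (X ^ i * dualMap f j) = 0 := by
  obtain ⟨a, rfl⟩ : ∃ a, i = a + (j + 1) := ⟨i - (j + 1), by omega⟩
  set low := ∑ m ∈ range (j + 1), C (f.coeff m) * X ^ m
  have hsplit : X ^ (j + 1) * dualMap f j + low = f := X_pow_mul_dualMap_add_sum_eq f (by omega)
  have hcongr : f ∣ X ^ (a + (j + 1)) * dualMap f j - -(X ^ a * low) :=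
    ⟨X ^ a, by linear_combination X ^ a * hsplit⟩
  have hdeg : (-(X ^ a * low)).degree < ↑(a + (j + 1)) := by
    rw [degree_neg]
    exact degree_X_pow_mul_sum_range_lt _ _ _
  rw [residue_eq_of_dvd_sub hf hcongr,
    residue_eq_coeff_of_degree_lt hf (hdeg.trans (by exact_mod_cast hi)),
    coeff_eq_zero_of_degree_lt (hdeg.trans_le (by exact_mod_cast (by omega)))]

end CommRing

end Polynomial

theorem weil_dual_basis_general {F : Type*} [Field F]
    (f : F[X]) (hf : f.Monic) (n : ℕ) (hn : f.natDegree = n)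
    (i j : ℕ) (hi : i < n) (hj : j < n) :
    ((X ^ i * ∑ jj ∈ Finset.range (n - j), C (f.coeff (j + jj + 1)) * X ^ jj) %ₘ f).coeff (n - 1)
      = if i = j then (1 : F) else 0 := by
  subst hn
  change residue f (X ^ i * dualMap f j) = _
  rcases le_or_gt i j with hij | hji
  · exact residue_X_pow_mul_dualMap_of_le hf hij hj
  · rw [residue_X_pow_mul_dualMap_of_lt hf hji hi, if_neg hji.ne']

/-- For a monic polynomial `f` of degree `n ≥ 1` over the finite field `F = 𝔽_q`,
with dual map `D_f(t^j) = ∑_{jj=0}^{n-j-1} a_{j+jj+1} t^jj`, the coefficient of `t^{n-1}` in the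
remainder of `t^i · D_f(t^j)` upon division by `f` equals the Kronecker delta `δ_{i,j}`,
for all `0 ≤ i, j ≤ n-1`. -/
theorem weil_dual_basis {F : Type*} [Field F] [Fintype F]
    (f : F[X]) (hf : f.Monic) (n : ℕ) (hn : f.natDegree = n) (hn1 : 1 ≤ n)
    (i j : ℕ) (hi : i < n) (hj : j < n) :
    ((X ^ i * ∑ jj ∈ Finset.range (n - j), C (f.coeff (j + jj + 1)) * X ^ jj) %ₘ f).coeff (n - 1)
      = if i = j then (1 : F) else 0 :=
  weil_dual_basis_general f hf n hn i j hi hj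
end

section
/- Let p ∈ 𝔽_q[t] be monic irreducible of degree d and let k ≥ 1. For all indices 0 ≤ i, l ≤ k−1 and 0 ≤ j, m ≤ d−1, the coefficient of t^{kd−1} in the remainder of p^i · t^j · D_p(t^m) · p^{k−1−l} upon division by p^k in 𝔽_q[t] equals δ_{i,l}·δ_{j,m}. (Equivalently, the quotient algebra 𝔽_q[t]/(p^k) has basis {p(t)^i t^j : 0 ≤ i < k, 0 ≤ j < d} whose dual basis under the residue pairing is {D_p(t^m)·p(t)^{k−1−l}·(−dt/p^k)}.) -/
/-!
Modulo monic polynomials, `(g * h) %ₘ (f * h) = (g %ₘ f) * h`, and the coefficient of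
`t^(deg f + deg h - 1)` of the right side is the coefficient of `t^(deg f - 1)` of `g %ₘ f`.
With `h = p^(i+k-1-l)` this reduces the pairing to `g = t^j D_p(t^m)` modulo `p^(l-i+1)`
(for `i > l` the product is divisible by `p^k`). For `i < l` the degree of `g` is too small, and
for `i = l` one is left with the case `k = 1`, settled by
`t^(m+1) D_p(t^m) ≡ -(b_0 + ⋯ + b_m t^m) (mod p)`.
-/

open Polynomial Finset

namespace Polynomial

variable {R : Type*}

section Semiring

variable [Semiring R]

/-- The paper's `D_p(t^m)`. -/
noncomputable def dualPoly (p : R[X]) (m : ℕ) : R[X] :=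
  ∑ n ∈ range (p.natDegree - m), C (p.coeff (m + n + 1)) * X ^ n

theorem coeff_dualPoly (p : R[X]) (m n : ℕ) : (dualPoly p m).coeff n = p.coeff (m + n + 1) := by
  simp only [dualPoly, finsetSum_coeff, coeff_C_mul_X_pow, sum_ite_eq, mem_range]
  split_ifs with h
  · rfl
  · exact (coeff_eq_zero_of_natDegree_lt (by omega)).symm

theorem natDegree_dualPoly_le (p : R[X]) (m : ℕ) :
    (dualPoly p m).natDegree ≤ p.natDegree - m - 1 := by
  rw [natDegree_le_iff_coeff_eq_zero]
  intro n hn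
  rw [coeff_dualPoly, coeff_eq_zero_of_natDegree_lt (by omega)]

end Semiring

section Ring

variable [Ring R]

theorem natDegree_sub_X_pow_mul_dualPoly_le (p : R[X]) (m : ℕ) :
    (p - X ^ (m + 1) * dualPoly p m).natDegree ≤ m := by
  rw [natDegree_le_iff_coeff_eq_zero]
  intro n hn
  rw [coeff_sub, coeff_X_pow_mul', if_pos (by omega), coeff_dualPoly,
    show m + (n - (m + 1)) + 1 = n by omega, sub_self]

theorem coeff_modByMonic_natDegree_pred_eq_zero {f q : R[X]} (hq : q.Monic)
    (hf : f.natDegree + 1 < q.natDegree) : (f %ₘ q).coeff (q.natDegree - 1) = 0 := by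
  nontriviality R
  rw [(modByMonic_eq_self_iff hq).2 (degree_lt_degree (by omega)),
    coeff_eq_zero_of_natDegree_lt (by omega)]

end Ring

section CommRing

variable [CommRing R]

theorem mul_modByMonic_mul {f h : R[X]} (hf : f.Monic) (hh : h.Monic) (g : R[X]) :
    (g * h) %ₘ (f * h) = (g %ₘ f) * h := by
  nontriviality R
  refine (div_modByMonic_unique (g /ₘ f) _ (hf.mul hh) ⟨?_, ?_⟩).2
  · linear_combination h * modByMonic_add_div g f
  · rw [hh.degree_mul, hh.degree_mul]
    exact WithBot.add_lt_add_right (degree_ne_bot.2 hh.ne_zero) (degree_modByMonic_lt g hf)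

theorem coeff_mul_modByMonic_mul {f h : R[X]} (hf : f.Monic) (hh : h.Monic)
    (hf0 : 0 < f.natDegree) (g : R[X]) :
    ((g * h) %ₘ (f * h)).coeff (f.natDegree - 1 + h.natDegree) =
      (g %ₘ f).coeff (f.natDegree - 1) := by
  nontriviality R
  have hr : (g %ₘ f).natDegree ≤ f.natDegree - 1 := by
    have := natDegree_modByMonic_lt g hf (by rintro rfl; simp at hf0)
    omega
  rw [mul_modByMonic_mul hf hh, coeff_mul_add_eq_of_natDegree_le hr le_rfl, hh.coeff_natDegree,
    mul_one]

end CommRing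

section Field

variable [Field R]

theorem coeff_X_pow_mul_dualPoly_modByMonic {p : R[X]} (hp : p.Monic) {j m : ℕ}
    (hj : j < p.natDegree) (hm : m < p.natDegree) :
    (X ^ j * dualPoly p m %ₘ p).coeff (p.natDegree - 1) = if j = m then 1 else 0 := by
  rcases le_or_gt j m with hjm | hmj
  · have hD := natDegree_dualPoly_le p m
    have hdeg : (X ^ j * dualPoly p m).natDegree < p.natDegree := by
      grw [natDegree_mul_le, natDegree_X_pow_le, hD]
      omega
    rw [(modByMonic_eq_self_iff hp).2 (degree_lt_degree hdeg), coeff_X_pow_mul',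
      if_pos (by omega), coeff_dualPoly]
    split_ifs with h
    · rw [← hp.coeff_natDegree]; congr 1; omega
    · exact coeff_eq_zero_of_natDegree_lt (by omega)
  · obtain ⟨a, rfl⟩ : ∃ a, j = m + 1 + a := ⟨j - m - 1, by omega⟩
    set T := p - X ^ (m + 1) * dualPoly p m
    have hT : T.natDegree ≤ m := natDegree_sub_X_pow_mul_dualPoly_le p m
    have hmod : X ^ (m + 1 + a) * dualPoly p m %ₘ p = -(X ^ a * T) %ₘ p :=
      modByMonic_eq_of_dvd_sub hp ⟨X ^ a, by simp only [T]; ring⟩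
    rw [hmod, if_neg (by omega)]
    refine coeff_modByMonic_natDegree_pred_eq_zero hp ?_
    grw [natDegree_neg, natDegree_mul_le, natDegree_X_pow_le, hT]
    omega

end Field

end Polynomial

theorem weil_dual_basis_prime_power_general {F : Type*} [Field F]
    (p : F[X]) (hp : p.Monic) (d : ℕ) (hd : p.natDegree = d)
    (k : ℕ)
    (i l j m : ℕ) (hl : l < k) (hj : j < d) (hm : m < d) :
    ((p ^ i * X ^ j * (∑ jj ∈ Finset.range (d - m), C (p.coeff (m + jj + 1)) * X ^ jj)
        * p ^ (k - 1 - l)) %ₘ p ^ k).coeff (k * d - 1)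
      = if i = l ∧ j = m then (1 : F) else 0 := by
  subst hd
  change ((p ^ i * X ^ j * dualPoly p m * p ^ (k - 1 - l)) %ₘ p ^ k).coeff _ = _
  obtain ⟨e, rfl⟩ : ∃ e, k = l + 1 + e := ⟨k - 1 - l, by omega⟩
  rw [show l + 1 + e - 1 - l = e by omega,
    show p ^ i * X ^ j * dualPoly p m * p ^ e = X ^ j * dualPoly p m * p ^ (i + e) by ring]
  obtain hli | hil := lt_or_ge l i
  · have hdvd : p ^ (l + 1 + e) ∣ X ^ j * dualPoly p m * p ^ (i + e) :=
      dvd_mul_of_dvd_right (pow_dvd_pow p (by omega)) _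
    rw [(modByMonic_eq_zero_iff_dvd (hp.pow _)).2 hdvd, coeff_zero, if_neg (by omega)]
  obtain ⟨n, rfl⟩ : ∃ n, l = i + n := ⟨l - i, by omega⟩
  have hidx : (i + n + 1 + e) * p.natDegree - 1
      = (p ^ (n + 1)).natDegree - 1 + (p ^ (i + e)).natDegree := by
    rw [hp.natDegree_pow, hp.natDegree_pow]
    have : (i + n + 1 + e) * p.natDegree = (n + 1) * p.natDegree + (i + e) * p.natDegree := by
      ring
    have : p.natDegree ≤ (n + 1) * p.natDegree := Nat.le_mul_of_pos_left _ (by omega)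
    omega
  have hpos : 0 < (p ^ (n + 1)).natDegree := by
    rw [hp.natDegree_pow]; exact Nat.mul_pos n.succ_pos (by omega)
  rw [hidx, show i + n + 1 + e = (n + 1) + (i + e) by omega, pow_add p (n + 1),
    coeff_mul_modByMonic_mul (hp.pow _) (hp.pow _) hpos]
  rcases n with _ | n
  · simpa using coeff_X_pow_mul_dualPoly_modByMonic hp hj hm
  · rw [if_neg (by omega)]
    refine coeff_modByMonic_natDegree_pred_eq_zero (hp.pow _) ?_
    grw [natDegree_mul_le, natDegree_X_pow_le, natDegree_dualPoly_le, hp.natDegree_pow]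
    have : 2 * p.natDegree ≤ (n + 1 + 1) * p.natDegree := Nat.mul_le_mul_right _ (by omega)
    omega

/-- Let `p ∈ 𝔽_q[t]` be monic irreducible of degree `d` and `k ≥ 1`. For all
`0 ≤ i, l ≤ k-1` and `0 ≤ j, m ≤ d-1`, the coefficient of `t^{kd-1}` in the remainder of
`p^i · t^j · D_p(t^m) · p^{k-1-l}` upon division by `p^k` equals `δ_{i,l}·δ_{j,m}`.
Here `D_p(t^m) = ∑_{jj=0}^{d-m-1} b_{m+jj+1} t^jj` with `b_s` the coefficients of `p`. -/
theorem weil_dual_basis_prime_power {F : Type*} [Field F] [Fintype F]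
    (p : F[X]) (hp : p.Monic) (hirr : Irreducible p) (d : ℕ) (hd : p.natDegree = d)
    (k : ℕ) (hk : 1 ≤ k)
    (i l j m : ℕ) (hi : i < k) (hl : l < k) (hj : j < d) (hm : m < d) :
    ((p ^ i * X ^ j * (∑ jj ∈ Finset.range (d - m), C (p.coeff (m + jj + 1)) * X ^ jj)
        * p ^ (k - 1 - l)) %ₘ p ^ k).coeff (k * d - 1)
      = if i = l ∧ j = m then (1 : F) else 0 :=
  weil_dual_basis_prime_power_general p hp d hd k i l j m hl hj hm
end

section
/- Let r ≥ 2 and set P = Π_{j=1}^{r−1} O_f^{(2)}(X_j, X_r) ∈ 𝔽_q[X_1,…,X_r] (a representative of the rank-r Weil operator O_f^{(r)}). For every polynomial g(X_1,…,X_r) ∈ 𝔽_q[X_1,…,X_r] and every choice of indices β_1,…,β_r ∈ {1,…,r}, one has g(X_1,…,X_r)·P ≡ g(X_{β_1},…,X_{β_r})·P Mod f(*). -/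
/- The divided-difference identity `(X_a - X_b) O_f(X_a, X_b) = f(X_a) - f(X_b)` shows that
`X_j P ≡ X_r P Mod f(*)` for every `j < r`, since `P` contains the factor `O_f(X_j, X_r)`.
Hence every `X_i - X_r`, and so every `X_i - X_{β_i}`, lies in the colon ideal `(f(*) : P)`.
Modulo an ideal containing all `X_i - X_{β_i}` the substitution `rename β` is the identity, since
both are algebra maps that agree on the variables. -/

open Finset MvPolynomial

/-- The rank-two Weil operator `O_g^{(2)}(X_a, X_b) = ∑_{j=1}^{deg g} b_j ∑_{α+β=j-1} X_a^α X_b^β`. -/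
noncomputable def weilO2 {F : Type*} [Field F] {σ : Type*} (g : Polynomial F) (a b : σ) :
    MvPolynomial σ F :=
  ∑ j ∈ Finset.range g.natDegree,
    MvPolynomial.C (g.coeff (j + 1)) *
      ∑ pr ∈ Finset.HasAntidiagonal.antidiagonal j, MvPolynomial.X a ^ pr.1 * MvPolynomial.X b ^ pr.2

namespace MvPolynomial

variable {R σ : Type*} [CommRing R]

theorem sub_rename_mem_of_forall_X_sub_X_mem {J : Ideal (MvPolynomial σ R)} (β : σ → σ)
    (hJ : ∀ i, X i - X (β i) ∈ J) (g : MvPolynomial σ R) : g - rename β g ∈ J := by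
  have hext : Ideal.Quotient.mkₐ R J = (Ideal.Quotient.mkₐ R J).comp (rename β) :=
    algHom_ext fun i => by simpa using Ideal.Quotient.eq.mpr (hJ i)
  exact Ideal.Quotient.eq.mp (congrArg (· g) hext)

end MvPolynomial

section WeilOperator

variable {F σ : Type*} [Field F]

theorem X_sub_X_mul_weilO2 (f : Polynomial F) (a b : σ) :
    (X a - X b) * weilO2 f a b =
      Polynomial.aeval (X a : MvPolynomial σ F) f -
        Polynomial.aeval (X b : MvPolynomial σ F) f := by
  rw [Polynomial.aeval_eq_sum_range, Polynomial.aeval_eq_sum_range, ← Finset.sum_sub_distrib,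
    Finset.sum_range_succ', weilO2, Finset.mul_sum]
  simp only [pow_zero, sub_self, add_zero, ← smul_sub]
  refine Finset.sum_congr rfl fun j _ => ?_
  rw [Finset.Nat.sum_antidiagonal_eq_sum_range_succ_mk, smul_eq_C_mul,
    ← geom_sum₂_mul, Nat.add_sub_cancel]
  ring

/-- The ideal `f(*)` of the relation `g ≡ h Mod f(*)`. -/
noncomputable abbrev spanAevalX (f : Polynomial F) : Ideal (MvPolynomial σ F) :=
  Ideal.span (Set.range fun i : σ => Polynomial.aeval (X i : MvPolynomial σ F) f)

theorem X_sub_X_mul_prod_weilO2_mem {ι : Type*} [DecidableEq ι] (f : Polynomial F) (v : ι → σ)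
    (c : σ) {s : Finset ι} {a : ι} (ha : a ∈ s) :
    (X (v a) - X c) * ∏ k ∈ s, weilO2 f (v k) c ∈ spanAevalX f := by
  rw [← Finset.mul_prod_erase s _ ha, ← mul_assoc, X_sub_X_mul_weilO2]
  exact Ideal.mul_mem_right _ _
    (sub_mem (Ideal.subset_span ⟨_, rfl⟩) (Ideal.subset_span ⟨_, rfl⟩))

end WeilOperator

theorem weil_operator_change_of_index_general {F : Type*} [Field F]
    (f : Polynomial F)
    (m : ℕ)
    (g : MvPolynomial (Fin (m + 1)) F) (β : Fin (m + 1) → Fin (m + 1)) :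
    g * (∏ j : Fin m, weilO2 f (Fin.castSucc j) (Fin.last m))
      - (MvPolynomial.rename β g) * (∏ j : Fin m, weilO2 f (Fin.castSucc j) (Fin.last m))
      ∈ Ideal.span (Set.range fun i : Fin (m + 1) =>
          Polynomial.aeval (MvPolynomial.X i : MvPolynomial (Fin (m + 1)) F) f) := by
  set P := ∏ j : Fin m, weilO2 f (Fin.castSucc j) (Fin.last m)
  have hlast (i : Fin (m + 1)) : X i - X (Fin.last m) ∈ (spanAevalX f).colon {P} := by
    rw [Submodule.mem_colon_singleton, smul_eq_mul]
    induction i using Fin.lastCases with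
    | last => simp
    | cast j => exact X_sub_X_mul_prod_weilO2_mem f _ _ (Finset.mem_univ j)
  have hβ (i : Fin (m + 1)) : X i - X (β i) ∈ (spanAevalX f).colon {P} := by
    simpa using sub_mem (hlast i) (hlast (β i))
  rw [← sub_mul, ← smul_eq_mul, ← Submodule.mem_colon_singleton]
  exact sub_rename_mem_of_forall_X_sub_X_mem β hβ g

/-- Let `r = m + 1 ≥ 2` and let
`P = ∏_{j=1}^{r-1} O_f^{(2)}(X_j, X_r)` in `𝔽_q[X_1,…,X_r]` (a representative of the rank-r
Weil operator).  For every polynomial `g(X_1,…,X_r)` and every choice of indices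
`β : {1,…,r} → {1,…,r}`, one has `g(X_1,…,X_r)·P ≡ g(X_{β_1},…,X_{β_r})·P Mod f(*)`,
i.e. the difference lies in the ideal generated by `f(X_1),…,f(X_r)`. -/
theorem weil_operator_change_of_index {F : Type*} [Field F] [Fintype F]
    (f : Polynomial F) (hf : f.Monic) (n : ℕ) (hn : f.natDegree = n) (hn1 : 1 ≤ n)
    (m : ℕ) (hm : 1 ≤ m)
    (g : MvPolynomial (Fin (m + 1)) F) (β : Fin (m + 1) → Fin (m + 1)) :
    g * (∏ j : Fin m, weilO2 f (Fin.castSucc j) (Fin.last m))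
      - (MvPolynomial.rename β g) * (∏ j : Fin m, weilO2 f (Fin.castSucc j) (Fin.last m))
      ∈ Ideal.span (Set.range fun i : Fin (m + 1) =>
          Polynomial.aeval (MvPolynomial.X i : MvPolynomial (Fin (m + 1)) F) f) :=
  weil_operator_change_of_index_general f m g β
end

section
/- For every 0 ≤ k ≤ n−1 one has the congruence X_1^k · O_f^{(2)}(X_1,X_2) ≡ −Σ_{i=0}^{k−1} a_i Σ_{α+β=k−i−1} X_1^{α+i} X_2^{β+i} + Σ_{i=k+1}^{n} a_i Σ_{α+β=i−k−1} X_1^{α+k} X_2^{β+k} modulo the ideal of 𝔽_q[X_1,X_2] generated by f(X_1) and f(X_2); moreover the right-hand side has degree < n in each of X_1 and X_2, so it is the unique such representative [t^k ∗ O_f^{(2)}]. -/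
open Finset MvPolynomial

/-!
Multiplication by `X a - X b`, a non-zero-divisor, turns `O_g^{(2)}(X a, X b)` into
`g(X a) - g(X b)` and the representative `[t^k ∗ O_g^{(2)}]` into `g(X a) X b^k - X a^k g(X b)`,
because each inner sum is a geometric sum. Hence `X a^k O_g^{(2)} - [t^k ∗ O_g^{(2)}]` becomes
`g(X a) (X a^k - X b^k)`, i.e. it equals `g(X a) ∑_{i<k} X a^i X b^(k-1-i)`.
For `k < deg g` every exponent occurring in the representative is below `deg g`.
-/

section AntidiagonalSums

variable {R : Type*} [CommRing R] (x y : R)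

theorem sum_antidiagonal_pow_mul_pow_mul_sub (m : ℕ) :
    (∑ pr ∈ antidiagonal m, x ^ pr.1 * y ^ pr.2) * (x - y) = x ^ (m + 1) - y ^ (m + 1) := by
  rw [Finset.Nat.sum_antidiagonal_eq_sum_range_succ_mk]
  exact geom_sum₂_mul x y (m + 1)

theorem sum_antidiagonal_shifted_mul_sub {i j : ℕ} (hij : i < j) :
    (∑ pr ∈ antidiagonal (j - i - 1), x ^ (pr.1 + i) * y ^ (pr.2 + i)) * (x - y)
      = x ^ j * y ^ i - x ^ i * y ^ j := by
  obtain ⟨m, rfl⟩ := Nat.exists_eq_add_of_lt hij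
  have hshift (pr : ℕ × ℕ) :
      x ^ (pr.1 + i) * y ^ (pr.2 + i) = x ^ i * y ^ i * (x ^ pr.1 * y ^ pr.2) := by
    ring
  rw [show i + m + 1 - i - 1 = m by omega]
  simp only [hshift, ← mul_sum, mul_assoc, sum_antidiagonal_pow_mul_pow_mul_sub]
  ring

end AntidiagonalSums

section DegreeBounds

variable {R : Type*} [CommSemiring R] [Nontrivial R] {σ : Type*} {a b : σ}

theorem degreeOf_X_pow_mul_X_pow_le (hab : a ≠ b) (v : σ) (p q : ℕ) :
    degreeOf v (X a ^ p * X b ^ q : MvPolynomial σ R) ≤ max p q := by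
  by_cases hva : v = a
  · subst hva
    rw [degreeOf_mul_X_pow_of_ne _ hab, degreeOf_X_self_pow]
    exact le_max_left p q
  have hb : degreeOf v (X b ^ q : MvPolynomial σ R) ≤ q := by
    by_cases hvb : v = b
    · rw [hvb, degreeOf_X_self_pow]
    · rw [degreeOf_X_pow_of_ne _ hvb]
      exact Nat.zero_le q
  calc degreeOf v (X a ^ p * X b ^ q : MvPolynomial σ R)
      ≤ degreeOf v (X a ^ p : MvPolynomial σ R) + degreeOf v (X b ^ q : MvPolynomial σ R) :=
        degreeOf_mul_le _ _ _
    _ ≤ max p q := by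
        rw [degreeOf_X_pow_of_ne _ hva, zero_add]
        exact hb.trans (le_max_right p q)

theorem degreeOf_C_mul_sum_X_pow_mul_X_pow_le {ι : Type*} (hab : a ≠ b) (v : σ) (c : R)
    (s : Finset ι) (e₁ e₂ : ι → ℕ) {d : ℕ} (he : ∀ i ∈ s, e₁ i ≤ d ∧ e₂ i ≤ d) :
    degreeOf v (C c * ∑ i ∈ s, X a ^ e₁ i * X b ^ e₂ i : MvPolynomial σ R) ≤ d :=
  (degreeOf_C_mul_le _ _ _).trans <| (degreeOf_sum_le _ _ _).trans <| Finset.sup_le fun i hi =>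
    (degreeOf_X_pow_mul_X_pow_le hab v _ _).trans (max_le (he i hi).1 (he i hi).2)

end DegreeBounds

section WeilOperator

variable {F : Type*} [Field F] {σ : Type*}

theorem aeval_X_eq_sum_range (g : Polynomial F) (a : σ) :
    Polynomial.aeval (X a : MvPolynomial σ F) g
      = ∑ i ∈ range (g.natDegree + 1), C (g.coeff i) * X a ^ i := by
  simp only [Polynomial.aeval_eq_sum_range, smul_eq_C_mul]

theorem weilO2_mul_X_sub_X (g : Polynomial F) (a b : σ) :
    weilO2 g a b * (X a - X b) = Polynomial.aeval (X a) g - Polynomial.aeval (X b) g := by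
  rw [weilO2, sum_mul, aeval_X_eq_sum_range, aeval_X_eq_sum_range, ← sum_sub_distrib,
    sum_range_succ' _ g.natDegree]
  simp only [mul_assoc, sum_antidiagonal_pow_mul_pow_mul_sub]
  simp only [mul_sub, pow_zero, sub_self, add_zero]

/-- The representative `[t^k ∗ O_g^{(2)}]` of the paper. -/
noncomputable def weilO2TPowRep (g : Polynomial F) (k : ℕ) (a b : σ) : MvPolynomial σ F :=
  -(∑ i ∈ range k, C (g.coeff i) *
      ∑ pr ∈ antidiagonal (k - i - 1), X a ^ (pr.1 + i) * X b ^ (pr.2 + i))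
  + ∑ i ∈ Icc (k + 1) g.natDegree, C (g.coeff i) *
      ∑ pr ∈ antidiagonal (i - k - 1), X a ^ (pr.1 + k) * X b ^ (pr.2 + k)

theorem weilO2TPowRep_mul_X_sub_X (g : Polynomial F) {k : ℕ} (hk : k ≤ g.natDegree) (a b : σ) :
    weilO2TPowRep g k a b * (X a - X b)
      = Polynomial.aeval (X a) g * X b ^ k - X a ^ k * Polynomial.aeval (X b) g := by
  set term : ℕ → MvPolynomial σ F :=
    fun i => C (g.coeff i) * (X a ^ i * X b ^ k - X a ^ k * X b ^ i)
  have hlow : ∀ i ∈ range k, C (g.coeff i) *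
      (∑ pr ∈ antidiagonal (k - i - 1), X a ^ (pr.1 + i) * X b ^ (pr.2 + i)) * (X a - X b)
        = -term i := fun i hi => by
    rw [mul_assoc, sum_antidiagonal_shifted_mul_sub _ _ (mem_range.mp hi)]
    ring
  have hhigh : ∀ i ∈ Icc (k + 1) g.natDegree, C (g.coeff i) *
      (∑ pr ∈ antidiagonal (i - k - 1), X a ^ (pr.1 + k) * X b ^ (pr.2 + k)) * (X a - X b)
        = term i := fun i hi => by
    rw [mul_assoc, sum_antidiagonal_shifted_mul_sub _ _ (mem_Icc.mp hi).1]
  calc weilO2TPowRep g k a b * (X a - X b)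
      = ∑ i ∈ range k, term i + ∑ i ∈ Icc (k + 1) g.natDegree, term i := by
        rw [weilO2TPowRep, add_mul, neg_mul, sum_mul, sum_mul, sum_congr rfl hlow,
          sum_congr rfl hhigh, sum_neg_distrib, neg_neg]
    _ = ∑ i ∈ range (g.natDegree + 1), term i := by
        rw [← sum_range_add_sum_Ico _ (by omega : k + 1 ≤ g.natDegree + 1), sum_range_succ,
          Ico_add_one_right_eq_Icc]
        simp [term]
    _ = _ := by
        simp only [term, aeval_X_eq_sum_range, sum_mul, mul_sum, ← sum_sub_distrib]
        exact sum_congr rfl fun i _ => by ring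

theorem X_pow_mul_weilO2_sub_weilO2TPowRep (g : Polynomial F) {k : ℕ} (hk : k ≤ g.natDegree)
    {a b : σ} (hab : a ≠ b) :
    X a ^ k * weilO2 g a b - weilO2TPowRep g k a b
      = (∑ i ∈ range k, X a ^ i * X b ^ (k - 1 - i)) * Polynomial.aeval (X a) g := by
  refine mul_right_cancel₀ (sub_ne_zero.mpr (X_injective.ne hab)) ?_
  calc (X a ^ k * weilO2 g a b - weilO2TPowRep g k a b) * (X a - X b)
      = X a ^ k * (weilO2 g a b * (X a - X b)) - weilO2TPowRep g k a b * (X a - X b) := by ring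
    _ = Polynomial.aeval (X a) g * (X a ^ k - X b ^ k) := by
        rw [weilO2_mul_X_sub_X, weilO2TPowRep_mul_X_sub_X g hk]
        ring
    _ = _ := by rw [mul_right_comm, geom_sum₂_mul, mul_comm]

theorem X_pow_mul_weilO2_sub_weilO2TPowRep_mem_span (g : Polynomial F) {k : ℕ}
    (hk : k ≤ g.natDegree) {a b : σ} (hab : a ≠ b) :
    X a ^ k * weilO2 g a b - weilO2TPowRep g k a b
      ∈ Ideal.span {Polynomial.aeval (X a) g, Polynomial.aeval (X b) g} := by
  rw [X_pow_mul_weilO2_sub_weilO2TPowRep g hk hab]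
  exact Ideal.mul_mem_left _ _ (Ideal.subset_span (Set.mem_insert _ _))

theorem degreeOf_weilO2TPowRep_lt (g : Polynomial F) {k : ℕ} (hk : k < g.natDegree) {a b : σ}
    (hab : a ≠ b) (v : σ) : degreeOf v (weilO2TPowRep g k a b) < g.natDegree := by
  refine lt_of_le_of_lt ?_ (Nat.sub_one_lt_of_lt hk)
  refine (degreeOf_add_le _ _ _).trans (max_le ?_ ?_)
  · rw [degreeOf_neg]
    refine (degreeOf_sum_le _ _ _).trans <| Finset.sup_le fun i hi =>
      degreeOf_C_mul_sum_X_pow_mul_X_pow_le hab v _ _ _ _ fun pr hpr => ?_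
    have := mem_antidiagonal.mp hpr
    have := mem_range.mp hi
    omega
  · refine (degreeOf_sum_le _ _ _).trans <| Finset.sup_le fun i hi =>
      degreeOf_C_mul_sum_X_pow_mul_X_pow_le hab v _ _ _ _ fun pr hpr => ?_
    have := mem_antidiagonal.mp hpr
    have := mem_Icc.mp hi
    omega

end WeilOperator

theorem weil_operator_tk_action_general {F : Type*} [Field F]
    (f : Polynomial F) (n : ℕ) (hn : f.natDegree = n) (hn1 : 1 ≤ n)
    (k : ℕ) (hk : k ≤ n - 1)
    (RHS : MvPolynomial (Fin 2) F)
    (hRHS : RHS =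
      -(∑ i ∈ Finset.range k, MvPolynomial.C (f.coeff i) *
          ∑ pr ∈ Finset.HasAntidiagonal.antidiagonal (k - i - 1),
            MvPolynomial.X 0 ^ (pr.1 + i) * MvPolynomial.X 1 ^ (pr.2 + i))
      + ∑ i ∈ Finset.Icc (k + 1) n, MvPolynomial.C (f.coeff i) *
          ∑ pr ∈ Finset.HasAntidiagonal.antidiagonal (i - k - 1),
            MvPolynomial.X 0 ^ (pr.1 + k) * MvPolynomial.X 1 ^ (pr.2 + k)) :
    (MvPolynomial.X 0 ^ k * weilO2 f (0 : Fin 2) 1 - RHS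
      ∈ Ideal.span {Polynomial.aeval (MvPolynomial.X 0 : MvPolynomial (Fin 2) F) f,
          Polynomial.aeval (MvPolynomial.X 1 : MvPolynomial (Fin 2) F) f})
    ∧ (∀ v : Fin 2, MvPolynomial.degreeOf v RHS < n) := by
  subst hn hRHS
  have hkn : k < f.natDegree := by omega
  have h01 : (0 : Fin 2) ≠ 1 := by decide
  exact ⟨X_pow_mul_weilO2_sub_weilO2TPowRep_mem_span f hkn.le h01,
    degreeOf_weilO2TPowRep_lt f hkn h01⟩

/-- For every `0 ≤ k ≤ n-1` one has
`X_1^k · O_f^{(2)}(X_1,X_2) ≡ −∑_{i=0}^{k-1} a_i ∑_{α+β=k-i-1} X_1^{α+i} X_2^{β+i}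
  + ∑_{i=k+1}^{n} a_i ∑_{α+β=i-k-1} X_1^{α+k} X_2^{β+k}`
modulo the ideal generated by `f(X_1)` and `f(X_2)`; moreover the right-hand side has degree
`< n` in each of `X_1, X_2`, so it is the unique such representative `[t^k ∗ O_f^{(2)}]`. -/
theorem weil_operator_tk_action {F : Type*} [Field F] [Fintype F]
    (f : Polynomial F) (hf : f.Monic) (n : ℕ) (hn : f.natDegree = n) (hn1 : 1 ≤ n)
    (k : ℕ) (hk : k ≤ n - 1)
    (RHS : MvPolynomial (Fin 2) F)
    (hRHS : RHS =
      -(∑ i ∈ Finset.range k, MvPolynomial.C (f.coeff i) *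
          ∑ pr ∈ Finset.HasAntidiagonal.antidiagonal (k - i - 1),
            MvPolynomial.X 0 ^ (pr.1 + i) * MvPolynomial.X 1 ^ (pr.2 + i))
      + ∑ i ∈ Finset.Icc (k + 1) n, MvPolynomial.C (f.coeff i) *
          ∑ pr ∈ Finset.HasAntidiagonal.antidiagonal (i - k - 1),
            MvPolynomial.X 0 ^ (pr.1 + k) * MvPolynomial.X 1 ^ (pr.2 + k)) :
    (MvPolynomial.X 0 ^ k * weilO2 f (0 : Fin 2) 1 - RHS
      ∈ Ideal.span {Polynomial.aeval (MvPolynomial.X 0 : MvPolynomial (Fin 2) F) f,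
          Polynomial.aeval (MvPolynomial.X 1 : MvPolynomial (Fin 2) F) f})
    ∧ (∀ v : Fin 2, MvPolynomial.degreeOf v RHS < n) :=
  weil_operator_tk_action_general f n hn hn1 k hk RHS hRHS
end

section
/- In 𝔽_q[X_1,X_2,X_3], modulo the ideal generated by f(X_1), f(X_2), f(X_3), one has O_f^{(2)}(X_1,X_3)·O_f^{(2)}(X_2,X_3) ≡ Σ_{k=0}^{n−1} Σ_{i=k+1}^{n} Σ_{j=0}^{n−k−1} Σ_{α=0}^{i−k−1} a_i a_{k+j+1} X_1^{α+k} X_2^{i−1−α} X_3^{j} − Σ_{k=0}^{n−1} Σ_{i=0}^{k−1} Σ_{j=0}^{n−k−1} Σ_{α=0}^{k−1−i} a_i a_{k+j+1} X_1^{α+i} X_2^{k−1−α} X_3^{j}; this explicit right-hand side is the rank-three Weil operator O_f^{(3)}(X_1,X_2,X_3). -/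
/-!
Write `O(x, z) = O_f^{(2)}(x, z) = ∑_k c_k(z) x^k`, where `c_k(z) = ∑_j a_{k+j+1} z^j` is the
`k`-th tail of `f`. Grouping the right-hand side by `k` gives `∑_k c_k(z) D_k(x, y)`, where
`(x - y) D_k(x, y) = f(x) y^k - x^k f(y)`; hence `(x - y)·RHS = f(x) O(y, z) - f(y) O(x, z)`.
On the other hand `(x - z) O(x, z) = f(x) - f(z)`, and writing `x - y = (x - z) - (y - z)` gives
`(x - y) (O(x, z) O(y, z) - RHS) = f(z) (O(x, z) - O(y, z))`. As `x - y` divides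
`O(x, z) - O(y, z) = ∑_k c_k(z) (x^k - y^k)`, cancelling it in the domain `F[X_1, X_2, X_3]` shows
that the difference is a multiple of `f(X_3)`. The degree bounds are read off the exponents.
-/

open Finset MvPolynomial

theorem Finset.sum_range_sum_antidiagonal {M : Type*} [AddCommMonoid M] (g : ℕ → ℕ → M)
    (m : ℕ) :
    ∑ j ∈ range m, ∑ p ∈ antidiagonal j, g p.1 p.2 =
      ∑ k ∈ range m, ∑ j ∈ range (m - k), g k j := by
  induction m with
  | zero => simp
  | succ m ih =>
    have hsucc : ∀ k ∈ range (m + 1),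
        ∑ j ∈ range (m + 1 - k), g k j = ∑ j ∈ range (m - k), g k j + g k (m - k) := by
      intro k hk
      rw [show m + 1 - k = m - k + 1 by grind, sum_range_succ]
    rw [sum_range_succ, ih, Nat.sum_antidiagonal_eq_sum_range_succ g, sum_congr rfl hsucc,
      sum_add_distrib, sum_range_succ (fun k => ∑ j ∈ range (m - k), g k j), Nat.sub_self,
      sum_range_zero, add_zero]

theorem sub_mul_sum_pow_mul_pow {R : Type*} [CommRing R] (x y : R) {a b : ℕ} (hab : a ≤ b) :
    (x - y) * ∑ α ∈ range (b - a), x ^ (α + a) * y ^ (b - 1 - α) =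
      x ^ b * y ^ a - x ^ a * y ^ b := by
  have hsum : ∑ α ∈ range (b - a), x ^ (α + a) * y ^ (b - 1 - α)
      = x ^ a * y ^ a * ∑ α ∈ range (b - a), x ^ α * y ^ (b - a - 1 - α) := by
    rw [mul_sum]
    refine sum_congr rfl fun α hα => ?_
    rw [show b - 1 - α = b - a - 1 - α + a by grind]
    ring
  obtain ⟨d, rfl⟩ := Nat.exists_eq_add_of_le hab
  rw [hsum, mul_left_comm, mul_comm (x - y), Nat.add_sub_cancel_left, geom_sum₂_mul]
  ring

theorem sub_mul_sum_antidiagonal_pow_mul_pow {R : Type*} [CommRing R] (x y : R) (j : ℕ) :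
    (x - y) * ∑ p ∈ antidiagonal j, x ^ p.1 * y ^ p.2 = x ^ (j + 1) - y ^ (j + 1) := by
  rw [Nat.sum_antidiagonal_eq_sum_range_succ_mk, mul_comm]
  simpa using geom_sum₂_mul x y (j + 1)

namespace MvPolynomial

variable {R σ : Type*} [CommRing R]

theorem aeval_eq_sum_range_C_mul (f : Polynomial R) (x : MvPolynomial σ R) :
    Polynomial.aeval x f = ∑ i ∈ range (f.natDegree + 1), C (f.coeff i) * x ^ i := by
  simp only [Polynomial.aeval_eq_sum_range, smul_eq_C_mul]

theorem C_mul_X_pow_mul_X_pow_mul_X_pow_mem_restrictDegree (r : R) {i j l m : ℕ}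
    (hi : i ≤ m) (hj : j ≤ m) (hl : l ≤ m) :
    C r * X 0 ^ i * X 1 ^ j * X 2 ^ l ∈ restrictDegree (Fin 3) R m := by
  have hmono : (C r * X 0 ^ i * X 1 ^ j * X 2 ^ l : MvPolynomial (Fin 3) R) =
      monomial (Finsupp.single 0 i + Finsupp.single 1 j + Finsupp.single 2 l) r := by
    simp only [X_pow_eq_monomial, C_mul_monomial, monomial_mul, mul_one]
  rw [hmono, mem_restrictDegree]
  intro s hs v
  rw [Finset.mem_coe.mp (support_monomial_subset hs) |> Finset.mem_singleton.mp]
  fin_cases v <;> simp [hi, hj, hl]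

theorem degreeOf_le_of_mem_restrictDegree {p : MvPolynomial σ R} {m : ℕ}
    (hp : p ∈ restrictDegree σ R m) (v : σ) : degreeOf v p ≤ m :=
  degreeOf_le_iff.mpr fun s hs => (mem_restrictDegree ..).mp hp s hs v

end MvPolynomial

section WeilOperators

variable {R σ : Type*} [CommRing R]

noncomputable def weilTail (f : Polynomial R) (z : MvPolynomial σ R) (k : ℕ) : MvPolynomial σ R :=
  ∑ j ∈ range (f.natDegree - k), C (f.coeff (k + j + 1)) * z ^ j

noncomputable def weilQuot (f : Polynomial R) (x y : MvPolynomial σ R) (k : ℕ) :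
    MvPolynomial σ R :=
  ∑ i ∈ Icc (k + 1) f.natDegree, C (f.coeff i) * ∑ α ∈ range (i - k), x ^ (α + k) * y ^ (i - 1 - α)
    - ∑ i ∈ range k, C (f.coeff i) * ∑ α ∈ range (k - i), x ^ (α + i) * y ^ (k - 1 - α)

noncomputable def weilO3 (f : Polynomial R) (x y z : MvPolynomial σ R) : MvPolynomial σ R :=
  (∑ k ∈ range f.natDegree, ∑ i ∈ Icc (k + 1) f.natDegree, ∑ j ∈ range (f.natDegree - k),
      ∑ α ∈ range (i - k),
        C (f.coeff i * f.coeff (k + j + 1)) * x ^ (α + k) * y ^ (i - 1 - α) * z ^ j)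
    - (∑ k ∈ range f.natDegree, ∑ i ∈ range k, ∑ j ∈ range (f.natDegree - k),
      ∑ α ∈ range (k - i),
        C (f.coeff i * f.coeff (k + j + 1)) * x ^ (α + i) * y ^ (k - 1 - α) * z ^ j)

theorem sub_mul_weilQuot (f : Polynomial R) (x y : MvPolynomial σ R) {k : ℕ}
    (hk : k ≤ f.natDegree) :
    (x - y) * weilQuot f x y k = Polynomial.aeval x f * y ^ k - x ^ k * Polynomial.aeval y f := by
  set g : ℕ → MvPolynomial σ R := fun i => C (f.coeff i) * (x ^ i * y ^ k - x ^ k * y ^ i)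
  have hupper : ∀ i ∈ Icc (k + 1) f.natDegree,
      (x - y) * (C (f.coeff i) * ∑ α ∈ range (i - k), x ^ (α + k) * y ^ (i - 1 - α)) = g i := by
    intro i hi
    rw [mul_left_comm, sub_mul_sum_pow_mul_pow x y (by grind)]
  have hlower : ∀ i ∈ range k,
      (x - y) * (C (f.coeff i) * ∑ α ∈ range (k - i), x ^ (α + i) * y ^ (k - 1 - α)) = -g i := by
    intro i hi
    rw [mul_left_comm, sub_mul_sum_pow_mul_pow x y (by grind)]
    ring
  have hsplit : ∑ i ∈ range (f.natDegree + 1), g i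
      = ∑ i ∈ range k, g i + ∑ i ∈ Icc (k + 1) f.natDegree, g i := by
    rw [← sum_range_add_sum_Ico g (by omega : k + 1 ≤ f.natDegree + 1), sum_range_succ,
      Ico_add_one_right_eq_Icc]
    simp [g]
  rw [weilQuot, mul_sub, mul_sum, mul_sum, sum_congr rfl hupper, sum_congr rfl hlower,
    sum_neg_distrib, sub_neg_eq_add, add_comm, ← hsplit, aeval_eq_sum_range_C_mul,
    aeval_eq_sum_range_C_mul, sum_mul, mul_sum, ← sum_sub_distrib]
  exact sum_congr rfl fun i _ => by ring

theorem weilO3_eq_sum_weilTail_mul_weilQuot (f : Polynomial R) (x y z : MvPolynomial σ R) :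
    weilO3 f x y z = ∑ k ∈ range f.natDegree, weilTail f z k * weilQuot f x y k := by
  rw [weilO3, ← sum_sub_distrib]
  refine sum_congr rfl fun k _ => ?_
  rw [weilQuot, mul_sub, weilTail, sum_mul_sum, sum_mul_sum]
  congr 1 <;> rw [sum_comm] <;> refine sum_congr rfl fun j _ => sum_congr rfl fun i _ => ?_ <;>
    rw [mul_left_comm, mul_sum, mul_sum] <;> refine sum_congr rfl fun α _ => ?_ <;>
    rw [C_mul] <;> ring

theorem weilO3_mem_restrictDegree (f : Polynomial R) :
    weilO3 f (X 0) (X 1) (X 2) ∈ restrictDegree (Fin 3) R (f.natDegree - 1) := by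
  refine sub_mem
    (sum_mem fun k hk => sum_mem fun i hi => sum_mem fun j hj => sum_mem fun α hα => ?_)
    (sum_mem fun k hk => sum_mem fun i hi => sum_mem fun j hj => sum_mem fun α hα => ?_) <;>
  simp only [mem_range, mem_Icc] at hk hi hj hα <;>
  exact C_mul_X_pow_mul_X_pow_mul_X_pow_mem_restrictDegree _ (by omega) (by omega) (by omega)

end WeilOperators

section WeilO2

variable {F σ : Type*} [Field F]

theorem weilO2_eq_sum_weilTail_mul (f : Polynomial F) (a c : σ) :
    weilO2 f a c = ∑ k ∈ range f.natDegree, weilTail f (X c) k * X a ^ k := by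
  have hterm : ∀ j ∈ range f.natDegree,
      C (f.coeff (j + 1)) * ∑ p ∈ antidiagonal j, (X a : MvPolynomial σ F) ^ p.1 * X c ^ p.2 =
        ∑ p ∈ antidiagonal j, C (f.coeff (p.1 + p.2 + 1)) * X c ^ p.2 * X a ^ p.1 := by
    intro j _
    rw [mul_sum]
    refine sum_congr rfl fun p hp => ?_
    rw [mem_antidiagonal.mp hp]
    ring
  simp only [weilO2, weilTail, sum_congr rfl hterm, sum_mul]
  exact sum_range_sum_antidiagonal (fun k j => C (f.coeff (k + j + 1)) * X c ^ j * X a ^ k) _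

theorem sub_mul_weilO2 (f : Polynomial F) (a b : σ) :
    (X a - X b) * weilO2 f a b = Polynomial.aeval (X a) f - Polynomial.aeval (X b) f := by
  rw [aeval_eq_sum_range_C_mul, aeval_eq_sum_range_C_mul, weilO2, mul_sum, ← sum_sub_distrib,
    sum_range_succ']
  simp only [pow_zero, mul_one, sub_self, add_zero]
  refine sum_congr rfl fun j _ => ?_
  rw [mul_left_comm, sub_mul_sum_antidiagonal_pow_mul_pow, mul_sub]

theorem X_sub_X_dvd_weilO2_sub_weilO2 (f : Polynomial F) (a b c : σ) :
    X a - X b ∣ weilO2 f a c - weilO2 f b c := by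
  rw [weilO2_eq_sum_weilTail_mul, weilO2_eq_sum_weilTail_mul, ← sum_sub_distrib]
  exact dvd_sum fun k _ => by rw [← mul_sub]; exact (sub_dvd_pow_sub_pow _ _ k).mul_left _

theorem sub_mul_weilO3 (f : Polynomial F) (a b c : σ) :
    (X a - X b) * weilO3 f (X a) (X b) (X c) =
      Polynomial.aeval (X a) f * weilO2 f b c - Polynomial.aeval (X b) f * weilO2 f a c := by
  rw [weilO3_eq_sum_weilTail_mul_weilQuot, weilO2_eq_sum_weilTail_mul,
    weilO2_eq_sum_weilTail_mul, mul_sum, mul_sum, mul_sum, ← sum_sub_distrib]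
  refine sum_congr rfl fun k hk => ?_
  rw [mul_left_comm, sub_mul_weilQuot f _ _ (mem_range.mp hk).le]
  ring

theorem aeval_dvd_weilO2_mul_weilO2_sub_weilO3 (f : Polynomial F) {a b : σ} (hab : a ≠ b)
    (c : σ) :
    Polynomial.aeval (X c) f ∣ weilO2 f a c * weilO2 f b c - weilO3 f (X a) (X b) (X c) := by
  obtain ⟨q, hq⟩ := X_sub_X_dvd_weilO2_sub_weilO2 f a b c
  have hne : (X a - X b : MvPolynomial σ F) ≠ 0 := sub_ne_zero.mpr fun h => hab (X_injective h)
  refine ⟨q, mul_left_cancel₀ hne ?_⟩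
  linear_combination weilO2 f b c * sub_mul_weilO2 f a c - weilO2 f a c * sub_mul_weilO2 f b c
    - sub_mul_weilO3 f a b c + Polynomial.aeval (X c) f * hq

end WeilO2

theorem weil_operator_rank_three_formula_general {F : Type*} [Field F]
    (f : Polynomial F) (n : ℕ) (hn : f.natDegree = n) (hn1 : 1 ≤ n)
    (RHS : MvPolynomial (Fin 3) F)
    (hRHS : RHS =
      (∑ k ∈ Finset.range n, ∑ i ∈ Finset.Icc (k + 1) n, ∑ j ∈ Finset.range (n - k),
          ∑ α ∈ Finset.range (i - k),
            MvPolynomial.C (f.coeff i * f.coeff (k + j + 1)) *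
              MvPolynomial.X 0 ^ (α + k) * MvPolynomial.X 1 ^ (i - 1 - α)
                * MvPolynomial.X 2 ^ j)
      - (∑ k ∈ Finset.range n, ∑ i ∈ Finset.range k, ∑ j ∈ Finset.range (n - k),
          ∑ α ∈ Finset.range (k - i),
            MvPolynomial.C (f.coeff i * f.coeff (k + j + 1)) *
              MvPolynomial.X 0 ^ (α + i) * MvPolynomial.X 1 ^ (k - 1 - α)
                * MvPolynomial.X 2 ^ j)) :
    (weilO2 f (0 : Fin 3) 2 * weilO2 f (1 : Fin 3) 2 - RHS
      ∈ Ideal.span {Polynomial.aeval (MvPolynomial.X 0 : MvPolynomial (Fin 3) F) f,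
          Polynomial.aeval (MvPolynomial.X 1 : MvPolynomial (Fin 3) F) f,
          Polynomial.aeval (MvPolynomial.X 2 : MvPolynomial (Fin 3) F) f})
    ∧ (∀ v : Fin 3, MvPolynomial.degreeOf v RHS < n) := by
  subst hn
  change RHS = weilO3 f (X 0) (X 1) (X 2) at hRHS
  subst hRHS
  refine ⟨?_, fun v => ?_⟩
  · exact Ideal.span_mono (by simp)
      (Ideal.mem_span_singleton.mpr (aeval_dvd_weilO2_mul_weilO2_sub_weilO3 f (by decide) 2))
  · exact Nat.lt_of_le_pred hn1
      (degreeOf_le_of_mem_restrictDegree (weilO3_mem_restrictDegree f) v)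

/-- In `𝔽_q[X_1,X_2,X_3]`, modulo the ideal generated by
`f(X_1), f(X_2), f(X_3)`, one has
`O_f^{(2)}(X_1,X_3)·O_f^{(2)}(X_2,X_3)
  ≡ ∑_{k=0}^{n-1} ∑_{i=k+1}^{n} ∑_{j=0}^{n-k-1} ∑_{α=0}^{i-k-1}
      a_i a_{k+j+1} X_1^{α+k} X_2^{i-1-α} X_3^{j}
    − ∑_{k=0}^{n-1} ∑_{i=0}^{k-1} ∑_{j=0}^{n-k-1} ∑_{α=0}^{k-1-i}
      a_i a_{k+j+1} X_1^{α+i} X_2^{k-1-α} X_3^{j}`;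
and this right-hand side, which has all partial degrees `< n`, is the rank-three Weil
operator `O_f^{(3)}(X_1,X_2,X_3)`. -/
theorem weil_operator_rank_three_formula {F : Type*} [Field F] [Fintype F]
    (f : Polynomial F) (hf : f.Monic) (n : ℕ) (hn : f.natDegree = n) (hn1 : 1 ≤ n)
    (RHS : MvPolynomial (Fin 3) F)
    (hRHS : RHS =
      (∑ k ∈ Finset.range n, ∑ i ∈ Finset.Icc (k + 1) n, ∑ j ∈ Finset.range (n - k),
          ∑ α ∈ Finset.range (i - k),
            MvPolynomial.C (f.coeff i * f.coeff (k + j + 1)) *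
              MvPolynomial.X 0 ^ (α + k) * MvPolynomial.X 1 ^ (i - 1 - α)
                * MvPolynomial.X 2 ^ j)
      - (∑ k ∈ Finset.range n, ∑ i ∈ Finset.range k, ∑ j ∈ Finset.range (n - k),
          ∑ α ∈ Finset.range (k - i),
            MvPolynomial.C (f.coeff i * f.coeff (k + j + 1)) *
              MvPolynomial.X 0 ^ (α + i) * MvPolynomial.X 1 ^ (k - 1 - α)
                * MvPolynomial.X 2 ^ j)) :
    (weilO2 f (0 : Fin 3) 2 * weilO2 f (1 : Fin 3) 2 - RHS
      ∈ Ideal.span {Polynomial.aeval (MvPolynomial.X 0 : MvPolynomial (Fin 3) F) f,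
          Polynomial.aeval (MvPolynomial.X 1 : MvPolynomial (Fin 3) F) f,
          Polynomial.aeval (MvPolynomial.X 2 : MvPolynomial (Fin 3) F) f})
    ∧ (∀ v : Fin 3, MvPolynomial.degreeOf v RHS < n) :=
  weil_operator_rank_three_formula_general f n hn hn1 RHS hRHS
end

section
/- Let p be a polynomial over a commutative ring and let δ_l denote the l-th Hasse–Schmidt derivative. (1) For all 0 ≤ l < k, p divides δ_l(p^k). (2) If p ∈ 𝔽_q[t] is monic irreducible (𝔽_q a finite field) and k ≥ 1, then δ_k(p^k) is coprime to p, i.e., p does not divide δ_k(p^k). -/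
/-!
By the Leibniz rule, `δ_l (p ^ k)` is divisible by `p ^ (k - l)`: each of the `l` derivations
can consume at most one factor `p`. Modulo `p` the only surviving term of `δ_k (p ^ k)` is the
one where every factor is differentiated exactly once, so `δ_k (p ^ k) ≡ (p') ^ k [mod p]`.
An irreducible polynomial over a finite field is separable, hence coprime to `p'`, and so
cannot divide `(p') ^ k`.
-/

open Polynomial Finset

namespace Polynomial

variable {R : Type*} [CommRing R]

theorem pow_sub_dvd_hasseDeriv_pow (p : R[X]) (k l : ℕ) :
    p ^ (k - l) ∣ hasseDeriv l (p ^ k) := by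
  induction k generalizing l with
  | zero => simp
  | succ k ih =>
    rw [pow_succ', hasseDeriv_mul]
    refine dvd_sum fun ij hij => ?_
    obtain ⟨i, j⟩ := ij
    rw [HasAntidiagonal.mem_antidiagonal] at hij
    rcases Nat.eq_zero_or_pos i with rfl | hi
    · rw [zero_add] at hij
      subst hij
      rw [hasseDeriv_zero']
      calc p ^ (k + 1 - j) ∣ p * p ^ (k - j) := by
            rw [← pow_succ']; exact pow_dvd_pow p (by omega)
        _ ∣ p * hasseDeriv j (p ^ k) := mul_dvd_mul_left p (ih j)
    · calc p ^ (k + 1 - l) ∣ p ^ (k - j) := pow_dvd_pow p (by omega)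
        _ ∣ hasseDeriv i p * hasseDeriv j (p ^ k) := (ih j).mul_left _

theorem dvd_hasseDeriv_pow {p : R[X]} {k l : ℕ} (hlk : l < k) : p ∣ hasseDeriv l (p ^ k) :=
  (dvd_pow_self p (by omega)).trans (pow_sub_dvd_hasseDeriv_pow p k l)

theorem dvd_hasseDeriv_pow_self_sub_derivative_pow (p : R[X]) (k : ℕ) :
    p ∣ hasseDeriv k (p ^ k) - derivative p ^ k := by
  rw [← Ideal.mem_span_singleton, ← Ideal.Quotient.mk_eq_mk_iff_sub_mem]
  induction k with
  | zero => simp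
  | succ k ih =>
    rw [pow_succ', hasseDeriv_mul, map_sum, sum_eq_single (1, k)]
    · rw [map_mul, hasseDeriv_one', ih, pow_succ', map_mul, map_pow]
    · rintro ⟨i, j⟩ hij hne
      rw [HasAntidiagonal.mem_antidiagonal] at hij
      rw [Ideal.Quotient.eq_zero_iff_mem, Ideal.mem_span_singleton]
      rcases Nat.eq_zero_or_pos i with rfl | hi
      · rw [hasseDeriv_zero']
        exact dvd_mul_right p _
      · have hjk : j < k := by
          by_contra! hjk
          exact hne (Prod.ext (by omega) (by omega))
        exact (dvd_hasseDeriv_pow hjk).mul_left _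
    · exact fun h => absurd (HasAntidiagonal.mem_antidiagonal.2 (add_comm 1 k)) h

theorem not_dvd_hasseDeriv_pow_self {p : R[X]} (hp : p.Separable) (hu : ¬IsUnit p) (k : ℕ) :
    ¬p ∣ hasseDeriv k (p ^ k) := fun hdvd =>
  have hdvd' : p ∣ derivative p ^ k := by
    simpa using dvd_sub hdvd (dvd_hasseDeriv_pow_self_sub_derivative_pow p k)
  hu (IsCoprime.pow_right hp |>.isUnit_of_dvd' dvd_rfl hdvd')

end Polynomial

/-- Let `δ_l` denote the `l`-th Hasse–Schmidt derivative of polynomials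
(Mathlib's `Polynomial.hasseDeriv`).  (1) Over any commutative ring, for all `0 ≤ l < k`,
`p` divides `δ_l(p^k)`.  (2) If `p ∈ 𝔽_q[t]` is monic irreducible over a finite field and
`k ≥ 1`, then `δ_k(p^k)` is coprime to `p`, i.e. `p` does not divide `δ_k(p^k)`. -/
theorem hasseDeriv_pow_dvd_and_coprime :
    (∀ (R : Type) [CommRing R] (p : Polynomial R) (k l : ℕ), l < k →
        p ∣ Polynomial.hasseDeriv l (p ^ k))
    ∧ (∀ (F : Type) [Field F] [Fintype F] (p : Polynomial F), p.Monic → Irreducible p →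
        ∀ k : ℕ, 1 ≤ k → ¬ p ∣ Polynomial.hasseDeriv k (p ^ k)) :=
  ⟨fun _ _ _ _ _ hlk => dvd_hasseDeriv_pow hlk,
    fun _ _ _ _ _ hirr k _ =>
      not_dvd_hasseDeriv_pow_self (PerfectField.separable_of_irreducible hirr) hirr.not_isUnit k⟩
end

section
/- Let K be a commutative ring of prime characteristic p and let q = p^e for some e ≥ 1. For ω ∈ K[[t]], let ω^{(k)} denote the power series obtained by raising each coefficient of ω to the q^k-th power. Fix r ≥ 1 and elements g_0 = θ, g_1, …, g_r ∈ K. Suppose ω_1, …, ω_r ∈ K[[t]] each satisfy the Frobenius difference equation t·ω_i = Σ_{j=0}^{r} g_j·ω_i^{(j)}. Let κ ∈ K[[t]] be the determinant of the r×r matrix whose (i,j)-entry is ω_j^{(i−1)} (the Moore determinant of ω_1,…,ω_r). Then (−1)^{r−1}·g_r·κ^{(1)} = (t − θ)·κ. -/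
/-!
Write `F k` for the row `(ω_j^{(k)})_j`, so that `κ = det (F 0, …, F (r-1))` and
`κ^{(1)} = det (F 1, …, F r)`. The difference equation expresses `g_r • F r` as
`(t - θ) • F 0` plus a combination of `F 1, …, F (r-1)`. Substituted into the last row of the
determinant of `κ^{(1)}`, those extra rows are repeated and contribute nothing, and moving
`F 0` back to the top is a cyclic permutation of sign `(-1)^(r-1)`.
-/

open Matrix PowerSeries

theorem Matrix.det_submatrix_finRotate {R : Type*} [CommRing R] {n : ℕ}
    (M : Matrix (Fin (n + 1)) (Fin (n + 1)) R) :
    (M.submatrix (finRotate (n + 1)) id).det = (-1) ^ n * M.det := by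
  rw [det_permute, sign_finRotate]
  norm_cast

theorem Matrix.det_of_succ_mul {R : Type*} [CommRing R] {n : ℕ} (F : ℕ → Fin (n + 1) → R)
    {c : R} {b : Fin (n + 1) → R} (h : c • F (n + 1) = ∑ k, b k • F k) :
    c * (Matrix.of fun i : Fin (n + 1) => F (i + 1)).det
      = (-1) ^ n * b 0 * (Matrix.of fun i : Fin (n + 1) => F i).det := by
  set M := Matrix.of fun i : Fin (n + 1) => F i
  set N := M.submatrix (finRotate (n + 1)) id
  have hN : ∀ i, N i = F ((i + 1 : Fin (n + 1)) : ℕ) := fun i => by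
    ext j
    simp [N, M]
  have hshift : Matrix.of (fun i : Fin (n + 1) => F (i + 1))
      = N.updateRow (Fin.last n) (F (n + 1)) := by
    ext i j
    rcases eq_or_ne i (Fin.last n) with rfl | hi
    · simp
    · rw [updateRow_ne hi, hN, Fin.val_add_one_of_lt (Fin.lt_last_iff_ne_last.2 hi)]
      rfl
  have hrel : c • F (n + 1) = ∑ k, b (k + 1) • N k := by
    simp_rw [h, hN, ← finRotate_apply]
    exact (Equiv.sum_comp (finRotate (n + 1)) fun k => b k • F k).symm
  rw [hshift, ← det_updateRow_smul, hrel, det_updateRow_sum, Fin.last_add_one,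
    det_submatrix_finRotate, smul_eq_mul, mul_left_comm, mul_assoc]

theorem PowerSeries.map_iterateFrobenius_map_iterateFrobenius {K : Type*} [CommSemiring K]
    (p : ℕ) [ExpChar K p] (m n : ℕ) (φ : K⟦X⟧) :
    map (iterateFrobenius K p m) (map (iterateFrobenius K p n) φ)
      = map (iterateFrobenius K p (m + n)) φ := by
  rw [iterateFrobenius_add, map_comp]
  rfl

theorem moore_determinant_frobenius_equation_general
    {K : Type*} [CommRing K] (p : ℕ) [Fact p.Prime] [CharP K p]
    (e : ℕ)
    (r : ℕ) (hr : 1 ≤ r)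
    (g : Fin (r + 1) → K) (θ : K) (hθ : g 0 = θ)
    (ω : Fin r → PowerSeries K)
    (hω : ∀ i : Fin r,
      PowerSeries.X * ω i =
        ∑ j : Fin (r + 1),
          PowerSeries.C (g j) *
            PowerSeries.map (iterateFrobenius K p (e * (j : ℕ))) (ω i))
    (κ : PowerSeries K)
    (hκ : κ = Matrix.det (Matrix.of fun i j : Fin r =>
        PowerSeries.map (iterateFrobenius K p (e * (i : ℕ))) (ω j))) :
    (-1 : PowerSeries K) ^ (r - 1) * PowerSeries.C (g (Fin.last r)) *
        PowerSeries.map (iterateFrobenius K p e) κ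
      = (PowerSeries.X - PowerSeries.C θ) * κ := by
  obtain ⟨s, rfl⟩ : ∃ s, r = s + 1 := ⟨r - 1, by omega⟩
  set F : ℕ → Fin (s + 1) → K⟦X⟧ := fun i j => map (iterateFrobenius K p (e * i)) (ω j)
  have hκ_twist : map (iterateFrobenius K p e) κ = (of fun i : Fin (s + 1) => F (i + 1)).det := by
    rw [hκ, RingHom.map_det]
    congr 1
    ext i j
    simp [F, map_iterateFrobenius_map_iterateFrobenius, mul_add_one, add_comm]
  have hrel : C (g (Fin.last (s + 1))) • F (s + 1)
      = ∑ k : Fin (s + 1), ((if k = 0 then X else 0) - C (g k.castSucc)) • F k := by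
    funext j
    have h := hω j
    rw [Fin.sum_univ_castSucc, Fin.val_last] at h
    simp only [Fin.val_castSucc] at h
    simp only [Pi.smul_apply, smul_eq_mul, Finset.sum_apply, sub_mul, ite_mul, zero_mul,
      Finset.sum_sub_distrib, Finset.sum_ite_eq', Finset.mem_univ, ↓reduceIte,
      Fin.coe_ofNat_eq_mod, Nat.zero_mod, mul_zero, iterateFrobenius_zero, PowerSeries.map_id,
      id_eq, F]
    linear_combination -h
  rw [Nat.add_sub_cancel, hκ_twist, mul_assoc, det_of_succ_mul F hrel, ← hκ, ← mul_assoc,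
    ← mul_assoc, ← pow_add, Even.neg_one_pow ⟨s, rfl⟩, one_mul]
  simp [hθ]

/-- Let `K` be a commutative ring of prime characteristic `p` and `q = p^e`,
`e ≥ 1`.  For `ω ∈ K[[t]]`, the `k`-th Frobenius twist `ω^{(k)}` raises each coefficient to
the `q^k`-th power, i.e. it is `PowerSeries.map (iterateFrobenius K p (e·k))`.  Suppose
`ω_1, …, ω_r` each satisfy the Frobenius difference equation
`t·ω_i = ∑_{j=0}^{r} g_j·ω_i^{(j)}` (with `g_0 = θ`), and let `κ` be the Moore determinant,
the determinant of the matrix with `(i,j)`-entry `ω_j^{(i-1)}`.  Then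
`(−1)^{r-1}·g_r·κ^{(1)} = (t − θ)·κ`. -/
theorem moore_determinant_frobenius_equation
    {K : Type*} [CommRing K] (p : ℕ) [Fact p.Prime] [CharP K p]
    (e : ℕ) (he : 1 ≤ e) (q : ℕ) (hq : q = p ^ e)
    (r : ℕ) (hr : 1 ≤ r)
    (g : Fin (r + 1) → K) (θ : K) (hθ : g 0 = θ)
    (ω : Fin r → PowerSeries K)
    (hω : ∀ i : Fin r,
      PowerSeries.X * ω i =
        ∑ j : Fin (r + 1),
          PowerSeries.C (g j) *
            PowerSeries.map (iterateFrobenius K p (e * (j : ℕ))) (ω i))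
    (κ : PowerSeries K)
    (hκ : κ = Matrix.det (Matrix.of fun i j : Fin r =>
        PowerSeries.map (iterateFrobenius K p (e * (i : ℕ))) (ω j))) :
    (-1 : PowerSeries K) ^ (r - 1) * PowerSeries.C (g (Fin.last r)) *
        PowerSeries.map (iterateFrobenius K p e) κ
      = (PowerSeries.X - PowerSeries.C θ) * κ :=
  moore_determinant_frobenius_equation_general p e r hr g θ hθ ω hω κ hκ
end
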